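/- arXiv:1008.3635 — 4 statements merged into one kernel-verified Lean document; each statement's English description precedes it below -/
import Mathlib

section
/- For a nonnegative integrable function w on a cube I ⊂ ℝᵈ, a > 0, and any subcube J ⊆ I, letting w_a = min(w, a), one has ⟨w_a⟩_J · ⟨w_a⁻¹⟩_J ≤ ⟨w⟩_J · ⟨w⁻¹⟩_J, where ⟨f⟩_J denotes the average (1/|J|)∫_J f. -/
open MeasureTheory Real

/-- A cube in `ℝᵈ` (a closed ball in the sup metric on `Fin d → ℝ`). -/
def IsCube {d : ℕ} (s : Set (Fin d → ℝ)) : Prop :=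
  ∃ c : Fin d → ℝ, ∃ r : ℝ, 0 < r ∧ s = Metric.closedBall c r

/-! Writing `⟨f⟩ ⟨1/f⟩ = ½ ⨍⨍ (f(x)/f(y) + f(y)/f(x)) dx dy`, the claim reduces to the pointwise
inequality `s + 1/s ≤ r + 1/r`, where `r = u/v` and `s = min(u,a)/min(v,a)`: truncating at the
level `a` moves the ratio `r ≤ 1` of two values `u ≤ v` towards `1`, and `t ↦ t + 1/t` decreases
on `(0, 1]`. -/

theorem add_inv_le_add_inv_of_le_of_le_one {r s : ℝ} (hr : 0 < r) (hrs : r ≤ s) (hs : s ≤ 1) :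
    s + s⁻¹ ≤ r + r⁻¹ := by
  have hs0 : 0 < s := hr.trans_le hrs
  have hdiff : s + s⁻¹ - (r + r⁻¹) = (s - r) * (r * s - 1) / (r * s) := by field_simp; ring
  rw [← sub_nonpos, hdiff]
  exact div_nonpos_of_nonpos_of_nonneg
    (mul_nonpos_of_nonneg_of_nonpos (by linarith) (by nlinarith)) (by positivity)

theorem div_le_min_div_min {u v a : ℝ} (hu : 0 ≤ u) (hv : 0 < v) (huv : u ≤ v) (ha : 0 < a) :
    u / v ≤ min u a / min v a := by
  rcases le_total u a with hua | hau
  · rw [min_eq_left hua]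
    exact div_le_div_of_nonneg_left hu (lt_min hv ha) (min_le_left v a)
  · rw [min_eq_right hau, min_eq_right (hau.trans huv), div_self ha.ne']
    exact div_le_one_of_le₀ huv hv.le

theorem min_mul_inv_add_min_mul_inv_le {u v a : ℝ} (hu : 0 ≤ u) (hv : 0 ≤ v) (ha : 0 < a) :
    min u a * (min v a)⁻¹ + min v a * (min u a)⁻¹ ≤ u * v⁻¹ + v * u⁻¹ := by
  wlog huv : u ≤ v generalizing u v
  · linarith [this hv hu (le_of_not_ge huv)]
  rcases hu.eq_or_lt with rfl | hu
  · simp [ha.le]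
  have hv : 0 < v := hu.trans_le huv
  have hmin : min u a ≤ min v a := min_le_min_right a huv
  have hratio : ∀ x y : ℝ, x * y⁻¹ + y * x⁻¹ = x / y + (x / y)⁻¹ := fun x y => by
    rw [inv_div]; ring
  rw [hratio, hratio]
  exact add_inv_le_add_inv_of_le_of_le_one (div_pos hu hv) (div_le_min_div_min hu.le hv huv ha)
    (div_le_one_of_le₀ hmin (lt_min hv ha).le)

section Symmetrization

variable {α : Type*} [MeasurableSpace α] {μ : Measure α} {f g F G : α → ℝ}

theorem MeasureTheory.Integrable.mul_prod_add_mul_prod_swap (hf : Integrable f μ)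
    (hg : Integrable g μ) :
    Integrable (fun z : α × α => f z.1 * g z.2 + f z.2 * g z.1) (μ.prod μ) :=
  (hf.mul_prod hg).add ((hg.mul_prod hf).congr (ae_of_all _ fun _ => mul_comm _ _))

theorem integral_prod_mul_add_mul_swap [SFinite μ] (hf : Integrable f μ) (hg : Integrable g μ) :
    ∫ z, (f z.1 * g z.2 + f z.2 * g z.1) ∂μ.prod μ = 2 * ((∫ x, f x ∂μ) * ∫ x, g x ∂μ) := by
  have hswap : ∫ z, f z.2 * g z.1 ∂μ.prod μ = (∫ x, g x ∂μ) * ∫ x, f x ∂μ := by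
    simp only [mul_comm (f _)]
    exact integral_prod_mul g f
  rw [integral_add (hf.mul_prod hg) ((hg.mul_prod hf).congr (ae_of_all _ fun _ => mul_comm _ _)),
    integral_prod_mul f g, hswap]
  ring

theorem integral_mul_integral_le_of_forall [SFinite μ] (hf : Integrable f μ)
    (hg : Integrable g μ) (hF : Integrable F μ) (hG : Integrable G μ)
    (h : ∀ x y, f x * g y + f y * g x ≤ F x * G y + F y * G x) :
    (∫ x, f x ∂μ) * (∫ x, g x ∂μ) ≤ (∫ x, F x ∂μ) * ∫ x, G x ∂μ := by
  have := integral_mono (hf.mul_prod_add_mul_prod_swap hg) (hF.mul_prod_add_mul_prod_swap hG)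
    fun z => h z.1 z.2
  rw [integral_prod_mul_add_mul_swap hf hg, integral_prod_mul_add_mul_swap hF hG] at this
  linarith

theorem average_mul_average_le_of_forall [SFinite μ] (hf : Integrable f μ)
    (hg : Integrable g μ) (hF : Integrable F μ) (hG : Integrable G μ)
    (h : ∀ x y, f x * g y + f y * g x ≤ F x * G y + F y * G x) :
    (⨍ x, f x ∂μ) * (⨍ x, g x ∂μ) ≤ (⨍ x, F x ∂μ) * ⨍ x, G x ∂μ := by
  simp only [average_eq, smul_eq_mul]
  rw [mul_mul_mul_comm, mul_mul_mul_comm _ (∫ x, F x ∂μ)]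
  exact mul_le_mul_of_nonneg_left (integral_mul_integral_le_of_forall hf hg hF hG h)
    (mul_nonneg (inv_nonneg.2 measureReal_nonneg) (inv_nonneg.2 measureReal_nonneg))

end Symmetrization

theorem average_min_mul_average_inv_min_le {α : Type*} [MeasurableSpace α] {μ : Measure α}
    [IsFiniteMeasure μ] {w : α → ℝ} {a : ℝ} (hw0 : ∀ x, 0 ≤ w x) (ha : 0 < a)
    (hw : Integrable w μ) (hw_inv : Integrable (fun x => (w x)⁻¹) μ) :
    (⨍ x, min (w x) a ∂μ) * (⨍ x, (min (w x) a)⁻¹ ∂μ) ≤ (⨍ x, w x ∂μ) * ⨍ x, (w x)⁻¹ ∂μ := by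
  have hmin : Integrable (fun x => min (w x) a) μ := hw.inf (integrable_const a)
  have hmin_inv : Integrable (fun x => (min (w x) a)⁻¹) μ := by
    refine (hw_inv.sup (integrable_const a⁻¹)).mono'
      hmin.aemeasurable.inv.aestronglyMeasurable (ae_of_all _ fun x => ?_)
    rw [norm_of_nonneg (inv_nonneg.2 (le_min (hw0 x) ha.le))]
    rcases le_total (w x) a with h | h
    · rw [min_eq_left h]; exact le_max_left _ _
    · rw [min_eq_right h]; exact le_max_right _ _
  exact average_mul_average_le_of_forall hmin hmin_inv hw hw_inv
    fun x y => min_mul_inv_add_min_mul_inv_le (hw0 x) (hw0 y) ha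

theorem cutoff_A2_average_general {d : ℕ} (J : Set (Fin d → ℝ))
    (hJ : IsCube J)
    (w : (Fin d → ℝ) → ℝ) (hw0 : ∀ x, 0 ≤ w x)
    (a : ℝ) (ha : 0 < a)
    (hint : IntegrableOn w J) (hint' : IntegrableOn (fun x => (w x)⁻¹) J) :
    (⨍ x in J, min (w x) a) * (⨍ x in J, (min (w x) a)⁻¹) ≤
      (⨍ x in J, w x) * (⨍ x in J, (w x)⁻¹) := by
  obtain ⟨c, r, -, rfl⟩ := hJ
  have : IsFiniteMeasure (volume.restrict (Metric.closedBall c r)) :=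
    isFiniteMeasure_restrict.2 measure_closedBall_lt_top.ne
  exact average_min_mul_average_inv_min_le hw0 ha hint hint'

theorem cutoff_A2_average {d : ℕ} (I J : Set (Fin d → ℝ))
    (hI : IsCube I) (hJ : IsCube J) (hJI : J ⊆ I)
    (w : (Fin d → ℝ) → ℝ) (hw : Measurable w) (hw0 : ∀ x, 0 ≤ w x)
    (a : ℝ) (ha : 0 < a)
    (hint : IntegrableOn w J) (hint' : IntegrableOn (fun x => (w x)⁻¹) J) :
    (⨍ x in J, min (w x) a) * (⨍ x in J, (min (w x) a)⁻¹) ≤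
      (⨍ x in J, w x) * (⨍ x in J, (w x)⁻¹) :=
  cutoff_A2_average_general J hJ w hw0 a ha hint hint'
end

section
/- Let p₁ > p₂ be nonzero reals, w nonnegative on a cube I, a > 0, and w_a = min(w, a). Then for every subcube J ⊆ I, ⟨w_a^{p₁}⟩_J^{1/p₁} · ⟨w_a^{p₂}⟩_J^{-1/p₂} ≤ ⟨w^{p₁}⟩_J^{1/p₁} · ⟨w^{p₂}⟩_J^{-1/p₂}. -/
open MeasureTheory Real

/-!
Averages over `J` are integrals against the finite measure `(|J|)⁻¹ • volume|_J`, so it suffices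
to work with an arbitrary finite measure `μ`. Put `S_p(s) = ∫ min(w, s)^p dμ` and
`L(s) = log S_{p₁}(s) / p₁ - log S_{p₂}(s) / p₂`. The right derivative of `S_p` at `s > 0` is
`p s^(p-1) μ{w > s}`, hence
`L'(s) = μ{w > s} (s^(p₁-1) / S_{p₁}(s) - s^(p₂-1) / S_{p₂}(s))`,
which is nonnegative because `(min(w, s) / s)^p₁ ≤ (min(w, s) / s)^p₂` pointwise. So `L` is
nondecreasing on `(0, ∞)`, and `L(s)` tends to the untruncated value as `s → ∞` by dominated
convergence.
-/

open Set Filter Topology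

lemma monotoneOn_Ioi_of_hasDerivWithinAt_Ici_nonneg {f f' : ℝ → ℝ} {c : ℝ}
    (hf : ∀ x ∈ Ioi c, ContinuousAt f x)
    (hf' : ∀ x ∈ Ioi c, HasDerivWithinAt f (f' x) (Ici x) x)
    (hf'₀ : ∀ x ∈ Ioi c, 0 ≤ f' x) : MonotoneOn f (Ioi c) := by
  intro x hx y _ hxy
  have hsub : Icc x y ⊆ Ioi c := fun z hz => lt_of_lt_of_le hx hz.1
  have hsub' : Ico x y ⊆ Ioi c := Ico_subset_Icc_self.trans hsub
  exact image_le_of_deriv_right_le_deriv_boundary continuousOn_const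
    (fun z _ => hasDerivWithinAt_const z _ (f x)) le_rfl
    (fun z hz => (hf z (hsub hz)).continuousWithinAt) (fun z hz => hf' z (hsub' hz))
    (fun z hz => hf'₀ z (hsub' hz)) (right_mem_Icc.2 hxy)

section Pointwise

variable {v t a p : ℝ}

lemma rpow_mul_rpow_neg_eq_exp {x y b c : ℝ} (hx : 0 < x) (hy : 0 < y) :
    x ^ b * y ^ (-c) = exp (b * log x - c * log y) := by
  rw [rpow_def_of_pos hx, rpow_def_of_pos hy, ← exp_add]
  ring_nf

lemma norm_min_rpow_le (ha : 0 < a) (hat : a ≤ t) : ‖min v t ^ p‖ ≤ a ^ p + ‖v ^ p‖ := by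
  have hap : 0 ≤ a ^ p := rpow_nonneg ha.le p
  rcases min_cases v t with ⟨h, -⟩ | ⟨h, htv⟩
  · rw [h]; linarith
  · have ht : 0 < t := ha.trans_le hat
    have hv : 0 < v := ht.trans htv
    rw [h, norm_of_nonneg (rpow_nonneg ht.le p), norm_of_nonneg (rpow_nonneg hv.le p)]
    rcases le_total 0 p with hp | hp
    · linarith [rpow_le_rpow ht.le htv.le hp]
    · linarith [rpow_le_rpow_of_nonpos ha hat hp, rpow_nonneg hv.le p]

lemma rpow_mul_rpow_le_rpow_mul_rpow {p₁ p₂ : ℝ} (hv : 0 ≤ v) (hvt : v ≤ t) (hp₁ : p₁ ≠ 0)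
    (hp : p₂ ≤ p₁) : t ^ p₂ * v ^ p₁ ≤ t ^ p₁ * v ^ p₂ := by
  rcases hv.eq_or_lt with rfl | hv
  · rw [zero_rpow hp₁, mul_zero]
    exact mul_nonneg (rpow_nonneg hvt _) (rpow_nonneg le_rfl _)
  · have ht : 0 < t := hv.trans_le hvt
    have := rpow_le_rpow_of_exponent_ge (div_pos hv ht) (div_le_one_of_le₀ hvt ht.le) hp
    rw [div_rpow hv.le ht.le, div_rpow hv.le ht.le,
      div_le_div_iff₀ (rpow_pos_of_pos ht _) (rpow_pos_of_pos ht _)] at this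
    linarith

lemma continuousAt_min_rpow (ht : 0 < t) : ContinuousAt (fun s => min v s ^ p) t := by
  rcases le_or_gt v 0 with hv | hv
  · refine (continuousAt_const (y := v ^ p)).congr ?_
    filter_upwards [lt_mem_nhds ht] with s hs
    rw [min_eq_left (hv.trans hs.le)]
  · exact (continuousAt_const.min continuousAt_id).rpow_const (Or.inl (lt_min hv ht).ne')

lemma hasDerivAt_min_rpow_of_lt (ht : 0 < t) (hv : t < v) :
    HasDerivAt (fun s => min v s ^ p) (p * t ^ (p - 1)) t := by
  refine (hasDerivAt_rpow_const (Or.inl ht.ne')).congr_of_eventuallyEq ?_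
  filter_upwards [gt_mem_nhds hv] with s hs
  rw [min_eq_right hs.le]

lemma exists_lipschitzOnWith_min_rpow (ht : 0 < t) :
    ∃ K, ∃ U ∈ 𝓝 t, ∀ v, t < v → LipschitzOnWith K (fun s => min v s ^ p) U := by
  obtain ⟨K, U, hU, hK⟩ :=
    (contDiffAt_rpow_const_of_ne (p := p) (n := 1) ht.ne').exists_lipschitzOnWith
  obtain ⟨ε, hε, hball⟩ := Metric.mem_nhds_iff.1 hU
  refine ⟨K, Metric.ball t ε, Metric.ball_mem_nhds t hε, fun v hv => ?_⟩
  have hmaps : MapsTo (min v) (Metric.ball t ε) (Metric.ball t ε) := by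
    intro s hs
    rw [Real.ball_eq_Ioo] at hs ⊢
    exact ⟨lt_min (by linarith [hs.1]) hs.1, (min_le_right v s).trans_lt hs.2⟩
  simpa [Function.comp_def] using
    (hK.mono hball).comp (LipschitzWith.id.const_min v).lipschitzOnWith hmaps

end Pointwise

section Truncation

variable {α : Type*} [MeasurableSpace α] {μ : Measure α} {w : α → ℝ} {t p p₁ p₂ : ℝ}

lemma integral_rpow_pos_iff {f : α → ℝ} (hf : ∀ x, 0 ≤ f x) (hp : p ≠ 0)
    (hint : Integrable (fun x => f x ^ p) μ) :
    0 < ∫ x, f x ^ p ∂μ ↔ 0 < μ {x | 0 < f x} := by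
  rw [integral_pos_iff_support_of_nonneg (fun x => rpow_nonneg (hf x) p) hint]
  congr! 3
  ext x
  simp [rpow_eq_zero (hf x) hp, (hf x).lt_iff_ne']

variable [IsFiniteMeasure μ]

lemma integrable_min_rpow (hw : Measurable w) (ht : 0 < t)
    (hint : Integrable (fun x => w x ^ p) μ) : Integrable (fun x => min (w x) t ^ p) μ :=
  ((integrable_const (t ^ p)).add hint.norm).mono'
    ((hw.min measurable_const).pow_const p).aestronglyMeasurable
    (.of_forall fun _ => norm_min_rpow_le ht le_rfl)

lemma integral_min_rpow_pos_iff (hw : Measurable w) (hw0 : ∀ x, 0 ≤ w x) (ht : 0 < t)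
    (hp : p ≠ 0) (hint : Integrable (fun x => w x ^ p) μ) :
    0 < ∫ x, min (w x) t ^ p ∂μ ↔ 0 < μ {x | 0 < w x} := by
  rw [integral_rpow_pos_iff (fun x => le_min (hw0 x) ht.le) hp (integrable_min_rpow hw ht hint)]
  simp only [lt_min_iff, ht, and_true]

lemma continuousAt_integral_min_rpow (hw : Measurable w) (ht : 0 < t)
    (hint : Integrable (fun x => w x ^ p) μ) :
    ContinuousAt (fun s => ∫ x, min (w x) s ^ p ∂μ) t := by
  refine continuousAt_of_dominated (bound := fun x => (t / 2) ^ p + ‖w x ^ p‖)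
    (.of_forall fun s => ((hw.min measurable_const).pow_const p).aestronglyMeasurable) ?_
    ((integrable_const _).add hint.norm) (.of_forall fun _ => continuousAt_min_rpow ht)
  filter_upwards [lt_mem_nhds (half_lt_self ht)] with s hs
  exact .of_forall fun _ => norm_min_rpow_le (half_pos ht) hs.le

lemma tendsto_integral_min_rpow_atTop (hw : Measurable w)
    (hint : Integrable (fun x => w x ^ p) μ) :
    Tendsto (fun s => ∫ x, min (w x) s ^ p ∂μ) atTop (𝓝 (∫ x, w x ^ p ∂μ)) := by
  refine tendsto_integral_filter_of_dominated_convergence (fun x => 1 ^ p + ‖w x ^ p‖)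
    (.of_forall fun s => ((hw.min measurable_const).pow_const p).aestronglyMeasurable) ?_
    ((integrable_const _).add hint.norm) (.of_forall fun x => ?_)
  · filter_upwards [eventually_ge_atTop 1] with s hs
    exact .of_forall fun _ => norm_min_rpow_le one_pos hs
  · refine tendsto_const_nhds.congr' ?_
    filter_upwards [eventually_ge_atTop (w x)] with s hs
    rw [min_eq_left hs]

/-- On `[t, ∞)` the truncations agree with a family that leaves `w` untouched on `{w ≤ t}`;
that family is differentiable at `t` pointwise, even on the atom `{w = t}`. -/
lemma hasDerivWithinAt_integral_min_rpow (hw : Measurable w) (ht : 0 < t)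
    (hint : Integrable (fun x => w x ^ p) μ) :
    HasDerivWithinAt (fun s => ∫ x, min (w x) s ^ p ∂μ)
      (p * t ^ (p - 1) * μ.real {x | t < w x}) (Ici t) t := by
  set A := {x | t < w x}
  have hA : MeasurableSet A := measurableSet_lt measurable_const hw
  set F : ℝ → α → ℝ := fun s x => if t < w x then min (w x) s ^ p else w x ^ p
  have hF : ∀ s ∈ Ici t, (fun x => min (w x) s ^ p) = F s := by
    intro s hs
    funext x
    by_cases hx : t < w x
    · simp [F, hx]
    · simp [F, hx, min_eq_left ((not_lt.1 hx).trans hs)]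
  obtain ⟨K, U, hU, hK⟩ := exists_lipschitzOnWith_min_rpow (p := p) ht
  have hderiv := hasDerivAt_integral_of_dominated_loc_of_lip (F := F) (bound := fun _ => (K : ℝ))
    (F' := A.indicator fun _ => p * t ^ (p - 1)) hU
    (.of_forall fun s => (((hw.min measurable_const).pow_const p).piecewise hA
      (hw.pow_const p)).aestronglyMeasurable)
    (hF t (mem_Ici.2 le_rfl) ▸ integrable_min_rpow hw ht hint)
    ((measurable_const.indicator hA).aestronglyMeasurable)
    (.of_forall fun x => ?_) (integrable_const _) (.of_forall fun x => ?_)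
  · rw [integral_indicator_const _ hA, smul_eq_mul, mul_comm (μ.real A)] at hderiv
    exact hderiv.2.hasDerivWithinAt.congr_of_mem
      (fun s hs => integral_congr_ae (.of_forall (congrFun (hF s hs)))) (mem_Ici.2 le_rfl)
  · by_cases hx : t < w x
    · simpa [F, hx] using hK (w x) hx
    · simpa [F, hx] using (LipschitzWith.const' (w x ^ p)).lipschitzOnWith (s := U)
  · by_cases hx : t < w x
    · simpa [F, A, hx] using hasDerivAt_min_rpow_of_lt (p := p) ht hx
    · simpa [F, A, hx] using hasDerivAt_const t (w x ^ p)

lemma hasDerivWithinAt_log_integral_min_rpow (hw : Measurable w) (ht : 0 < t) (hp : p ≠ 0)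
    (hint : Integrable (fun x => w x ^ p) μ) (hpos : 0 < ∫ x, min (w x) t ^ p ∂μ) :
    HasDerivWithinAt (fun s => 1 / p * log (∫ x, min (w x) s ^ p ∂μ))
      (t ^ (p - 1) * μ.real {x | t < w x} / ∫ x, min (w x) t ^ p ∂μ) (Ici t) t := by
  refine (((hasDerivWithinAt_integral_min_rpow hw ht hint).log hpos.ne').const_mul
    (1 / p)).congr_deriv ?_
  field_simp

lemma rpow_mul_integral_min_rpow_le (hw : Measurable w) (hw0 : ∀ x, 0 ≤ w x) (ht : 0 < t)
    (hp₁ : p₁ ≠ 0) (hp : p₂ ≤ p₁) (hint₁ : Integrable (fun x => w x ^ p₁) μ)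
    (hint₂ : Integrable (fun x => w x ^ p₂) μ) :
    t ^ p₂ * ∫ x, min (w x) t ^ p₁ ∂μ ≤ t ^ p₁ * ∫ x, min (w x) t ^ p₂ ∂μ := by
  rw [← integral_const_mul, ← integral_const_mul]
  exact integral_mono ((integrable_min_rpow hw ht hint₁).const_mul _)
    ((integrable_min_rpow hw ht hint₂).const_mul _)
    fun x => rpow_mul_rpow_le_rpow_mul_rpow (le_min (hw0 x) ht.le) (min_le_right _ _) hp₁ hp

lemma monotoneOn_log_integral_min_rpow_sub (hw : Measurable w) (hw0 : ∀ x, 0 ≤ w x)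
    (hp₁ : p₁ ≠ 0) (hp₂ : p₂ ≠ 0) (hp : p₂ ≤ p₁) (hint₁ : Integrable (fun x => w x ^ p₁) μ)
    (hint₂ : Integrable (fun x => w x ^ p₂) μ) (hpos : 0 < μ {x | 0 < w x}) :
    MonotoneOn (fun s => 1 / p₁ * log (∫ x, min (w x) s ^ p₁ ∂μ) -
      1 / p₂ * log (∫ x, min (w x) s ^ p₂ ∂μ)) (Ioi 0) := by
  have hS₁ : ∀ s ∈ Ioi (0 : ℝ), 0 < ∫ x, min (w x) s ^ p₁ ∂μ := fun s hs =>
    (integral_min_rpow_pos_iff hw hw0 hs hp₁ hint₁).2 hpos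
  have hS₂ : ∀ s ∈ Ioi (0 : ℝ), 0 < ∫ x, min (w x) s ^ p₂ ∂μ := fun s hs =>
    (integral_min_rpow_pos_iff hw hw0 hs hp₂ hint₂).2 hpos
  refine monotoneOn_Ioi_of_hasDerivWithinAt_Ici_nonneg (f' := fun s =>
    s ^ (p₁ - 1) * μ.real {x | s < w x} / (∫ x, min (w x) s ^ p₁ ∂μ) -
      s ^ (p₂ - 1) * μ.real {x | s < w x} / ∫ x, min (w x) s ^ p₂ ∂μ)
    (fun s hs => ?_) (fun s hs => ?_) (fun s hs => ?_)
  · exact (continuousAt_const.mul ((continuousAt_integral_min_rpow hw hs hint₁).log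
      (hS₁ s hs).ne')).sub (continuousAt_const.mul
      ((continuousAt_integral_min_rpow hw hs hint₂).log (hS₂ s hs).ne'))
  · exact (hasDerivWithinAt_log_integral_min_rpow hw hs hp₁ hint₁ (hS₁ s hs)).sub
      (hasDerivWithinAt_log_integral_min_rpow hw hs hp₂ hint₂ (hS₂ s hs))
  · have hν : 0 ≤ μ.real {x | s < w x} / s := div_nonneg measureReal_nonneg (le_of_lt hs)
    have key := mul_le_mul_of_nonneg_left
      (rpow_mul_integral_min_rpow_le hw hw0 hs hp₁ hp hint₁ hint₂) hν
    rw [sub_nonneg, div_le_div_iff₀ (hS₂ s hs) (hS₁ s hs), rpow_sub_one (ne_of_gt hs),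
      rpow_sub_one (ne_of_gt hs)]
    convert key using 1 <;> ring

lemma integral_min_rpow_ratio_le (hw : Measurable w) (hw0 : ∀ x, 0 ≤ w x) (hp₁ : p₁ ≠ 0)
    (hp₂ : p₂ ≠ 0) (hp : p₂ ≤ p₁) (ht : 0 < t) (hint₁ : Integrable (fun x => w x ^ p₁) μ)
    (hint₂ : Integrable (fun x => w x ^ p₂) μ) :
    (∫ x, min (w x) t ^ p₁ ∂μ) ^ (1 / p₁) * (∫ x, min (w x) t ^ p₂ ∂μ) ^ (-(1 / p₂)) ≤
      (∫ x, w x ^ p₁ ∂μ) ^ (1 / p₁) * (∫ x, w x ^ p₂ ∂μ) ^ (-(1 / p₂)) := by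
  rcases eq_zero_or_pos (μ {x | 0 < w x}) with hzero | hpos
  · have hS : ∫ x, min (w x) t ^ p₁ ∂μ = 0 :=
      le_antisymm
        (not_lt.1 fun h => ((integral_min_rpow_pos_iff hw hw0 ht hp₁ hint₁).1 h).ne' hzero)
        (integral_nonneg fun x => rpow_nonneg (le_min (hw0 x) ht.le) p₁)
    have hnonneg : ∀ q : ℝ, 0 ≤ ∫ x, w x ^ q ∂μ := fun q =>
      integral_nonneg fun x => rpow_nonneg (hw0 x) q
    rw [hS, zero_rpow (one_div_ne_zero hp₁), zero_mul]
    exact mul_nonneg (rpow_nonneg (hnonneg _) _) (rpow_nonneg (hnonneg _) _)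
  have hT₁ := (integral_rpow_pos_iff hw0 hp₁ hint₁).2 hpos
  have hT₂ := (integral_rpow_pos_iff hw0 hp₂ hint₂).2 hpos
  have hlim :=
    (((tendsto_integral_min_rpow_atTop hw hint₁).log hT₁.ne').const_mul (1 / p₁)).sub
      (((tendsto_integral_min_rpow_atTop hw hint₂).log hT₂.ne').const_mul (1 / p₂))
  have hmono := monotoneOn_log_integral_min_rpow_sub hw hw0 hp₁ hp₂ hp hint₁ hint₂ hpos
  rw [rpow_mul_rpow_neg_eq_exp ((integral_min_rpow_pos_iff hw hw0 ht hp₁ hint₁).2 hpos)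
    ((integral_min_rpow_pos_iff hw hw0 ht hp₂ hint₂).2 hpos), rpow_mul_rpow_neg_eq_exp hT₁ hT₂,
    exp_le_exp]
  exact ge_of_tendsto hlim (eventually_atTop.2 ⟨t, fun s hs => hmono ht (ht.trans_le hs) hs⟩)

end Truncation

theorem cutoff_Ap1p2_average_general {d : ℕ} (J : Set (Fin d → ℝ))
    (p₁ p₂ : ℝ) (hp₁ : p₁ ≠ 0) (hp₂ : p₂ ≠ 0) (hp : p₂ < p₁)
    (w : (Fin d → ℝ) → ℝ) (hw : Measurable w) (hw0 : ∀ x, 0 ≤ w x)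
    (a : ℝ) (ha : 0 < a)
    (hint₁ : IntegrableOn (fun x => w x ^ p₁) J)
    (hint₂ : IntegrableOn (fun x => w x ^ p₂) J) :
    (⨍ x in J, (min (w x) a) ^ p₁) ^ (1 / p₁) * (⨍ x in J, (min (w x) a) ^ p₂) ^ (-(1 / p₂)) ≤
      (⨍ x in J, w x ^ p₁) ^ (1 / p₁) * (⨍ x in J, w x ^ p₂) ^ (-(1 / p₂)) :=
  integral_min_rpow_ratio_le hw hw0 hp₁ hp₂ hp.le ha hint₁.to_average hint₂.to_average

theorem cutoff_Ap1p2_average {d : ℕ} (I J : Set (Fin d → ℝ))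
    (hI : IsCube I) (hJ : IsCube J) (hJI : J ⊆ I)
    (p₁ p₂ : ℝ) (hp₁ : p₁ ≠ 0) (hp₂ : p₂ ≠ 0) (hp : p₂ < p₁)
    (w : (Fin d → ℝ) → ℝ) (hw : Measurable w) (hw0 : ∀ x, 0 ≤ w x)
    (a : ℝ) (ha : 0 < a)
    (hint₁ : IntegrableOn (fun x => w x ^ p₁) J)
    (hint₂ : IntegrableOn (fun x => w x ^ p₂) J) :
    (⨍ x in J, (min (w x) a) ^ p₁) ^ (1 / p₁) * (⨍ x in J, (min (w x) a) ^ p₂) ^ (-(1 / p₂)) ≤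
      (⨍ x in J, w x ^ p₁) ^ (1 / p₁) * (⨍ x in J, w x ^ p₂) ^ (-(1 / p₂)) :=
  cutoff_Ap1p2_average_general J p₁ p₂ hp₁ hp₂ hp w hw hw0 a ha hint₁ hint₂
end

section
/- For the A_p characteristic [v]_p := sup_{J ⊆ I} ⟨v⟩_J · ⟨v^{-1/(p-1)}⟩_J^{p-1} with p > 1, truncation from above satisfies [min(w,a)]_p ≤ [w]_p for every a > 0. -/
open MeasureTheory Real Filter

/-- The classical Muckenhoupt `A_p` characteristic over the cube `I`. -/
noncomputable def muckenhouptChar {d : ℕ} (I : Set (Fin d → ℝ)) (p : ℝ)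
    (w : (Fin d → ℝ) → ℝ) : ℝ :=
  sSup {r | ∃ J : Set (Fin d → ℝ), IsCube J ∧ J ⊆ I ∧
    r = (⨍ x in J, w x) * (⨍ x in J, w x ^ (-(1 / (p - 1)))) ^ (p - 1)}

lemma rpow_div_le_add_div_add {A X U : ℝ} (hA : 0 < A) (hU : 0 ≤ U) (hX : 0 ≤ X) :
    (X / A) ^ (A / (A + U)) ≤ (X + U) / (A + U) := by
  have hAU : 0 < A + U := by positivity
  have h := geom_mean_le_arith_mean2_weighted (p₂ := 1) (div_nonneg hA.le hAU.le)
    (div_nonneg hU hAU.le) (div_nonneg hX hA.le) zero_le_one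
    (by field_simp : A / (A + U) + U / (A + U) = 1)
  rw [one_rpow, mul_one] at h
  convert h using 1
  field_simp

lemma add_mul_add_rpow_le {s A B X Y U V : ℝ} (hs : 0 < s) (hA : 0 < A) (hB : 0 < B)
    (hU : 0 ≤ U) (hV : 0 ≤ V) (hAX : A ≤ X) (hY : 0 ≤ Y) (hXY : A * B ^ s ≤ X * Y ^ s)
    (hUV : B * U ≤ A * V) :
    (A + U) * (B + V) ^ s ≤ (X + U) * (Y + V) ^ s := by
  set θ₁ := A / (A + U)
  set θ₂ := B / (B + V)
  have hX : 0 ≤ X := hA.le.trans hAX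
  have hθ : θ₂ ≤ θ₁ := by
    rw [div_le_div_iff₀ (by positivity) (by positivity)]
    nlinarith
  have hXA : 1 ≤ X / A := (one_le_div hA).2 hAX
  have hprod : 1 ≤ X / A * (Y / B) ^ s := by
    rwa [div_rpow hY hB.le, div_mul_div_comm, one_le_div (by positivity)]
  have key : 1 ≤ (X + U) / (A + U) * ((Y + V) / (B + V)) ^ s :=
    calc 1 ≤ (X / A * (Y / B) ^ s) ^ θ₂ := one_le_rpow hprod (by positivity)
      _ = (X / A) ^ θ₂ * ((Y / B) ^ θ₂) ^ s := by
        rw [mul_rpow (by positivity) (by positivity), ← rpow_mul (by positivity),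
          ← rpow_mul (by positivity), mul_comm s]
      _ ≤ (X / A) ^ θ₁ * ((Y / B) ^ θ₂) ^ s := by gcongr
      _ ≤ (X + U) / (A + U) * ((Y + V) / (B + V)) ^ s := by
        gcongr
        · exact rpow_div_le_add_div_add hA hU hX
        · exact rpow_div_le_add_div_add hB hV hY
  rwa [div_rpow (by positivity) (by positivity), div_mul_div_comm,
    one_le_div (by positivity)] at key

section

variable {α : Type*} [MeasurableSpace α] {μ : Measure α}

lemma integral_rpow_mul_rpow_le {f g : α → ℝ} (hf0 : 0 ≤ᵐ[μ] f) (hg0 : 0 ≤ᵐ[μ] g)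
    (hf : Integrable f μ) (hg : Integrable g μ) {s t : ℝ} (hs : 0 ≤ s) (ht : 0 ≤ t)
    (hst : s + t = 1) :
    ∫ x, f x ^ s * g x ^ t ∂μ ≤ (∫ x, f x ∂μ) ^ s * (∫ x, g x ∂μ) ^ t := by
  have hfg0 : 0 ≤ᵐ[μ] fun x => f x ^ s * g x ^ t := by
    filter_upwards [hf0, hg0] with x hfx hgx
    exact mul_nonneg (rpow_nonneg hfx s) (rpow_nonneg hgx t)
  have hfgm : AEStronglyMeasurable (fun x => f x ^ s * g x ^ t) μ := by
    have := hf.1; have := hg.1; fun_prop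
  have hfin : (∫⁻ x, ENNReal.ofReal (f x) ∂μ) ^ s * (∫⁻ x, ENNReal.ofReal (g x) ∂μ) ^ t ≠ ⊤ :=
    ENNReal.mul_ne_top
      (ENNReal.rpow_ne_top_of_nonneg hs ((lintegral_ofReal_ne_top_iff_integrable hf.1 hf0).2 hf))
      (ENNReal.rpow_ne_top_of_nonneg ht ((lintegral_ofReal_ne_top_iff_integrable hg.1 hg0).2 hg))
  rw [integral_eq_lintegral_of_nonneg_ae hfg0 hfgm, integral_eq_lintegral_of_nonneg_ae hf0 hf.1,
    integral_eq_lintegral_of_nonneg_ae hg0 hg.1, ENNReal.toReal_rpow, ENNReal.toReal_rpow,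
    ← ENNReal.toReal_mul]
  refine ENNReal.toReal_mono hfin ?_
  calc ∫⁻ x, ENNReal.ofReal (f x ^ s * g x ^ t) ∂μ
      = ∫⁻ x, ENNReal.ofReal (f x) ^ s * ENNReal.ofReal (g x) ^ t ∂μ := by
        refine lintegral_congr_ae ?_
        filter_upwards [hf0, hg0] with x hfx hgx
        rw [ENNReal.ofReal_mul (rpow_nonneg hfx s), ENNReal.ofReal_rpow_of_nonneg hfx hs,
          ENNReal.ofReal_rpow_of_nonneg hgx ht]
    _ ≤ _ := ENNReal.lintegral_mul_norm_pow_le hf.1.aemeasurable.ennreal_ofReal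
        hg.1.aemeasurable.ennreal_ofReal hs ht hst

lemma measureReal_rpow_le_setIntegral_mul_rpow {w : α → ℝ} {p : ℝ} {E : Set α} (hp : 1 < p)
    (hE : MeasurableSet E) (hpos : ∀ x ∈ E, 0 < w x) (hw : IntegrableOn w E μ)
    (hσ : IntegrableOn (fun x => w x ^ (-(1 / (p - 1)))) E μ) :
    μ.real E ^ p ≤ (∫ x in E, w x ∂μ) * (∫ x in E, w x ^ (-(1 / (p - 1))) ∂μ) ^ (p - 1) := by
  have hp0 : 0 < p := by linarith
  have hp1 : p - 1 ≠ 0 := by linarith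
  have hw0 : 0 ≤ᵐ[μ.restrict E] w := ae_restrict_of_forall_mem hE fun x hx => (hpos x hx).le
  have hσ0 : 0 ≤ᵐ[μ.restrict E] fun x => w x ^ (-(1 / (p - 1))) :=
    ae_restrict_of_forall_mem hE fun x hx => rpow_nonneg (hpos x hx).le _
  have hone : ∀ x ∈ E, w x ^ (1 / p) * (w x ^ (-(1 / (p - 1)))) ^ (1 - 1 / p) = 1 := by
    intro x hx
    rw [← rpow_mul (hpos x hx).le, ← rpow_add (hpos x hx)]
    convert rpow_zero (w x) using 2
    field_simp
    ring
  have holder := integral_rpow_mul_rpow_le hw0 hσ0 hw hσ (s := 1 / p) (by positivity)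
    (by rw [sub_nonneg, div_le_one hp0]; exact hp.le) (add_sub_cancel _ 1)
  rw [setIntegral_congr_fun hE hone, setIntegral_const, smul_eq_mul, mul_one] at holder
  calc μ.real E ^ p
      ≤ ((∫ x in E, w x ∂μ) ^ (1 / p) * (∫ x in E, w x ^ (-(1 / (p - 1))) ∂μ) ^ (1 - 1 / p)) ^ p :=
        rpow_le_rpow measureReal_nonneg holder hp0.le
    _ = _ := by
        have hX := integral_nonneg_of_ae hw0
        have hY := integral_nonneg_of_ae hσ0
        rw [mul_rpow (rpow_nonneg hX _) (rpow_nonneg hY _), ← rpow_mul hX, ← rpow_mul hY,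
          one_div_mul_cancel hp0.ne', rpow_one]
        congr 2
        field_simp

lemma rpow_neg_mul_le_mul_rpow_neg {x a c : ℝ} (hx : 0 ≤ x) (hxa : x ≤ a) (hc : 0 ≤ c) :
    a ^ (-c) * x ≤ a * x ^ (-c) := by
  rcases hx.eq_or_lt with rfl | hx
  · rw [mul_zero]
    exact mul_nonneg hxa (rpow_nonneg le_rfl _)
  · rw [mul_comm a]
    exact mul_le_mul (rpow_le_rpow_of_nonpos hx hxa (neg_nonpos.2 hc)) hxa hx.le
      (rpow_nonneg hx.le _)

lemma rpow_neg_mul_setIntegral_le {w : α → ℝ} {a c : ℝ} {F : Set α} (hF : MeasurableSet F)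
    (hw0 : ∀ x ∈ F, 0 ≤ w x) (hle : ∀ x ∈ F, w x ≤ a) (hc : 0 ≤ c) (hIw : IntegrableOn w F μ)
    (hIσ : IntegrableOn (fun x => w x ^ (-c)) F μ) :
    a ^ (-c) * ∫ x in F, w x ∂μ ≤ a * ∫ x in F, w x ^ (-c) ∂μ := by
  rw [← integral_const_mul, ← integral_const_mul]
  exact setIntegral_mono_on (hIw.const_mul _) (hIσ.const_mul _) hF
    fun x hx => rpow_neg_mul_le_mul_rpow_neg (hw0 x hx) (hle x hx) hc

lemma mul_measureReal_mul_rpow_le {w : α → ℝ} {p a : ℝ} {E : Set α} (hp : 1 < p) (ha : 0 < a)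
    (hE : MeasurableSet E) (hlt : ∀ x ∈ E, a < w x) (hm : 0 < μ.real E)
    (hIw : IntegrableOn w E μ) (hIσ : IntegrableOn (fun x => w x ^ (-(1 / (p - 1)))) E μ) :
    a * μ.real E * (a ^ (-(1 / (p - 1))) * μ.real E) ^ (p - 1) ≤
      (∫ x in E, w x ∂μ) * (∫ x in E, w x ^ (-(1 / (p - 1))) ∂μ) ^ (p - 1) := by
  convert measureReal_rpow_le_setIntegral_mul_rpow hp hE (fun x hx => ha.trans (hlt x hx)) hIw hIσ
    using 1
  rw [mul_rpow (rpow_nonneg ha.le _) hm.le, ← rpow_mul ha.le, rpow_sub_one hm.ne',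
    neg_mul, one_div_mul_cancel (sub_pos.2 hp).ne', rpow_neg_one]
  field_simp

lemma IntegrableOn.min_const_rpow {w : α → ℝ} {a r : ℝ} {J : Set α}
    (hIw : IntegrableOn (fun x => w x ^ r) J μ) (hw : Measurable w) (hw0 : ∀ x, 0 ≤ w x)
    (ha : 0 ≤ a) (hJfin : μ J ≠ ⊤) : IntegrableOn (fun x => min (w x) a ^ r) J μ := by
  refine (hIw.add (integrableOn_const (C := a ^ r) hJfin)).mono'
    ((hw.min measurable_const).pow_const _).aestronglyMeasurable (ae_of_all _ fun x => ?_)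
  rw [norm_of_nonneg (rpow_nonneg (le_min (hw0 x) ha) _)]
  change _ ≤ w x ^ r + a ^ r
  rcases min_choice (w x) a with h | h <;> rw [h]
  · exact le_add_of_nonneg_right (rpow_nonneg ha _)
  · exact le_add_of_nonneg_left (rpow_nonneg (hw0 x) _)

lemma setIntegral_comp_min_const {w : α → ℝ} {a : ℝ} {J : Set α} (g : ℝ → ℝ)
    (hw : Measurable w) (hJ : MeasurableSet J) (hI : IntegrableOn (fun x => g (min (w x) a)) J μ) :
    ∫ x in J, g (min (w x) a) ∂μ =
      g a * μ.real (J ∩ {x | a < w x}) + ∫ x in J \ {x | a < w x}, g (w x) ∂μ := by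
  have hT : MeasurableSet {x | a < w x} := measurableSet_lt measurable_const hw
  rw [← integral_inter_add_sdiff hT hI,
    setIntegral_congr_fun (hJ.inter hT) fun x hx => congrArg g (min_eq_right hx.2.le),
    setIntegral_congr_fun (hJ.diff hT) fun x hx => congrArg g (min_eq_left (not_lt.1 hx.2)),
    setIntegral_const, smul_eq_mul, mul_comm]

lemma setIntegral_min_mul_rpow_le {w : α → ℝ} {p a : ℝ} {J : Set α} (hp : 1 < p) (ha : 0 < a)
    (hw : Measurable w) (hw0 : ∀ x, 0 ≤ w x) (hJ : MeasurableSet J) (hJfin : μ J ≠ ⊤)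
    (hIw : IntegrableOn w J μ) (hIσ : IntegrableOn (fun x => w x ^ (-(1 / (p - 1)))) J μ) :
    (∫ x in J, min (w x) a ∂μ) * (∫ x in J, min (w x) a ^ (-(1 / (p - 1))) ∂μ) ^ (p - 1) ≤
      (∫ x in J, w x ∂μ) * (∫ x in J, w x ^ (-(1 / (p - 1))) ∂μ) ^ (p - 1) := by
  set c := 1 / (p - 1)
  have hc : 0 < c := one_div_pos.2 (sub_pos.2 hp)
  have hT : MeasurableSet {x | a < w x} := measurableSet_lt measurable_const hw
  set E := J ∩ {x | a < w x}
  set F := J \ {x | a < w x}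
  have hE : MeasurableSet E := hJ.inter hT
  have hF : MeasurableSet F := hJ.diff hT
  have hEfin : μ E ≠ ⊤ := measure_ne_top_of_subset Set.inter_subset_left hJfin
  rw [show ∫ x in J, min (w x) a ∂μ = _ from setIntegral_comp_min_const (fun t => t) hw hJ
      (hIw.inf (integrableOn_const hJfin)),
    show ∫ x in J, min (w x) a ^ (-c) ∂μ = _ from setIntegral_comp_min_const (· ^ (-c)) hw hJ
      (IntegrableOn.min_const_rpow hIσ hw hw0 ha.le hJfin),
    ← integral_inter_add_sdiff hT hIw, ← integral_inter_add_sdiff hT hIσ]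
  have hEw : 0 ≤ ∫ x in E, w x ∂μ := setIntegral_nonneg hE fun x _ => hw0 x
  have hEσ : 0 ≤ ∫ x in E, w x ^ (-c) ∂μ := setIntegral_nonneg hE fun x _ => rpow_nonneg (hw0 x) _
  have hFw : 0 ≤ ∫ x in F, w x ∂μ := setIntegral_nonneg hF fun x _ => hw0 x
  have hFσ : 0 ≤ ∫ x in F, w x ^ (-c) ∂μ := setIntegral_nonneg hF fun x _ => rpow_nonneg (hw0 x) _
  rcases measureReal_nonneg.eq_or_lt with hm | hm
  · rw [← hm, mul_zero, mul_zero, zero_add, zero_add]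
    gcongr <;> linarith
  have hEJ : E ⊆ J := Set.inter_subset_left
  have hE_ge : a * μ.real E ≤ ∫ x in E, w x ∂μ :=
    setIntegral_ge_of_const_le_real hE hEfin (fun x hx => hx.2.le) (hIw.mono_set hEJ)
  have hE_holder := mul_measureReal_mul_rpow_le hp ha hE (fun x hx => hx.2) hm (hIw.mono_set hEJ)
    (hIσ.mono_set hEJ)
  have hF_ratio : a ^ (-c) * μ.real E * ∫ x in F, w x ∂μ ≤ a * μ.real E * ∫ x in F, w x ^ (-c) ∂μ := by
    have hF_le := rpow_neg_mul_setIntegral_le hF (fun x _ => hw0 x) (fun x hx => not_lt.1 hx.2)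
      hc.le (hIw.mono_set Set.sdiff_subset) (hIσ.mono_set Set.sdiff_subset)
    linarith [mul_le_mul_of_nonneg_left hF_le hm.le]
  exact add_mul_add_rpow_le (sub_pos.2 hp) (by positivity) (by positivity) hFw hFσ hE_ge hEσ hE_holder hF_ratio

lemma setAverage_mul_setAverage_rpow (f g : α → ℝ) (J : Set α) (s : ℝ)
    (hg : 0 ≤ ∫ x in J, g x ∂μ) :
    (⨍ x in J, f x ∂μ) * (⨍ x in J, g x ∂μ) ^ s =
      ((μ.real J)⁻¹ * (μ.real J)⁻¹ ^ s) * ((∫ x in J, f x ∂μ) * (∫ x in J, g x ∂μ) ^ s) := by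
  simp only [setAverage_eq, smul_eq_mul]
  rw [mul_rpow (inv_nonneg.2 measureReal_nonneg) hg]
  ring

lemma setAverage_min_mul_rpow_le {w : α → ℝ} {p a : ℝ} {J : Set α} (hp : 1 < p) (ha : 0 < a)
    (hw : Measurable w) (hw0 : ∀ x, 0 ≤ w x) (hJ : MeasurableSet J) (hJfin : μ J ≠ ⊤)
    (hIw : IntegrableOn w J μ) (hIσ : IntegrableOn (fun x => w x ^ (-(1 / (p - 1)))) J μ) :
    (⨍ x in J, min (w x) a ∂μ) * (⨍ x in J, min (w x) a ^ (-(1 / (p - 1))) ∂μ) ^ (p - 1) ≤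
      (⨍ x in J, w x ∂μ) * (⨍ x in J, w x ^ (-(1 / (p - 1))) ∂μ) ^ (p - 1) := by
  rw [setAverage_mul_setAverage_rpow _ _ _ _
      (setIntegral_nonneg hJ fun x _ => rpow_nonneg (le_min (hw0 x) ha.le) _),
    setAverage_mul_setAverage_rpow _ _ _ _ (setIntegral_nonneg hJ fun x _ => rpow_nonneg (hw0 x) _)]
  exact mul_le_mul_of_nonneg_left (setIntegral_min_mul_rpow_le hp ha hw hw0 hJ hJfin hIw hIσ)
    (by positivity)

end

theorem cutoff_above_muckenhoupt {d : ℕ} (I : Set (Fin d → ℝ)) (hI : IsCube I)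
    (p : ℝ) (hp : 1 < p)
    (w : (Fin d → ℝ) → ℝ) (hw : Measurable w) (hw0 : ∀ x, 0 ≤ w x)
    (hint₁ : ∀ J : Set (Fin d → ℝ), IsCube J → J ⊆ I → IntegrableOn w J)
    (hint₂ : ∀ J : Set (Fin d → ℝ), IsCube J → J ⊆ I →
      IntegrableOn (fun x => w x ^ (-(1 / (p - 1)))) J)
    (hfin : BddAbove {r | ∃ J : Set (Fin d → ℝ), IsCube J ∧ J ⊆ I ∧
      r = (⨍ x in J, w x) * (⨍ x in J, w x ^ (-(1 / (p - 1)))) ^ (p - 1)})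
    (a : ℝ) (ha : 0 < a) :
    muckenhouptChar I p (fun x => min (w x) a) ≤ muckenhouptChar I p w := by
  refine csSup_le ⟨_, I, hI, subset_rfl, rfl⟩ ?_
  rintro _ ⟨J, hJ, hJI, rfl⟩
  refine le_trans ?_ (le_csSup hfin ⟨J, hJ, hJI, rfl⟩)
  have hIw := hint₁ J hJ hJI
  have hIσ := hint₂ J hJ hJI
  obtain ⟨c, r, -, rfl⟩ := hJ
  exact setAverage_min_mul_rpow_le hp ha hw hw0 measurableSet_closedBall
    measure_closedBall_lt_top.ne hIw hIσ
end

section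
/- Key algebraic inequality in the A₂ proof: if x₁, y₁ are averages of w and w⁻¹ over {w ≤ a} (so x₁ ≤ a, y₁ ≥ 1/a) and x₂, y₂ are averages of w and w⁻¹ over {w > a}, then x₁ y₂ + x₂ y₁ − y₁ a − x₁ a⁻¹ ≥ 0. -/
open MeasureTheory Real Filter

/-!
On `{w ≤ a}` we have `w ≤ a² w⁻¹`, so `x₁ ≤ a² y₁`. For such coefficients the map
`t ↦ x₁ t⁻¹ + y₁ t` is nondecreasing on `[a, ∞)`, being `x₁ a⁻¹ + y₁ a` plus
`(t - a)(y₁ a t - x₁) / (a t)`. Averaging it over `{w > a}` therefore gives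
`x₁ a⁻¹ + y₁ a ≤ x₁ y₂ + y₁ x₂`.
-/

namespace MeasureTheory

variable {α : Type*} [MeasurableSpace α] {μ : Measure α} {f g : α → ℝ}

theorem average_mono_ae (hf : Integrable f μ) (hg : Integrable g μ) (h : f ≤ᵐ[μ] g) :
    ⨍ x, f x ∂μ ≤ ⨍ x, g x ∂μ := by
  simp only [average_eq, smul_eq_mul]
  exact mul_le_mul_of_nonneg_left (integral_mono_ae hf hg h) (by positivity)

theorem average_add (hf : Integrable f μ) (hg : Integrable g μ) :
    ⨍ x, f x + g x ∂μ = ⨍ x, f x ∂μ + ⨍ x, g x ∂μ := by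
  simp only [average_eq, smul_eq_mul, integral_add hf hg, mul_add]

theorem average_const_mul (c : ℝ) (f : α → ℝ) :
    ⨍ x, c * f x ∂μ = c * ⨍ x, f x ∂μ := by
  simp only [average_eq, smul_eq_mul, integral_const_mul, mul_left_comm]

theorem average_nonneg (h : 0 ≤ᵐ[μ] f) : 0 ≤ ⨍ x, f x ∂μ := by
  rw [average_eq, smul_eq_mul]
  exact mul_nonneg (by positivity) (integral_nonneg_of_ae h)

end MeasureTheory

theorem le_sq_mul_inv_of_le {a t : ℝ} (ht : 0 ≤ t) (hta : t ≤ a) : t ≤ a ^ 2 * t⁻¹ := by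
  rcases ht.eq_or_lt with rfl | ht
  · simp
  · rw [← div_eq_mul_inv, le_div_iff₀ ht]
    nlinarith

theorem monotoneOn_mul_inv_add_mul {a p q : ℝ} (ha : 0 < a) (hp : 0 ≤ p)
    (hpq : p ≤ a ^ 2 * q) :
    MonotoneOn (fun t => p * t⁻¹ + q * t) (Set.Ici a) := by
  intro s (hs : a ≤ s) t (ht : a ≤ t) hst
  have hs₀ : 0 < s := ha.trans_le hs
  have ht₀ : 0 < t := ha.trans_le ht
  have hq : 0 ≤ q := nonneg_of_mul_nonneg_right (hp.trans hpq) (by positivity)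
  have hst_sq : a ^ 2 ≤ s * t := by nlinarith
  have hpst : p ≤ q * (s * t) :=
    hpq.trans (by rw [mul_comm]; exact mul_le_mul_of_nonneg_left hst_sq hq)
  have hdiff :
      p * t⁻¹ + q * t - (p * s⁻¹ + q * s) = (t - s) * (q * (s * t) - p) / (s * t) := by
    field_simp
    ring
  have hdiff_nonneg : 0 ≤ (t - s) * (q * (s * t) - p) / (s * t) :=
    div_nonneg (mul_nonneg (by linarith) (by linarith)) (by positivity)
  dsimp only
  linarith

section Averages

variable {α : Type*} [MeasurableSpace α] {ν : Measure α} {w : α → ℝ} {a : ℝ}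

theorem average_le_sq_mul_average_inv (hw : Integrable w ν)
    (hw' : Integrable (fun x => (w x)⁻¹) ν)
    (hw0 : 0 ≤ᵐ[ν] w) (hwa : ∀ᵐ x ∂ν, w x ≤ a) :
    ⨍ x, w x ∂ν ≤ a ^ 2 * ⨍ x, (w x)⁻¹ ∂ν := by
  rw [← average_const_mul]
  exact average_mono_ae hw (hw'.const_mul _) <| (hw0.and hwa).mono fun x hx =>
    le_sq_mul_inv_of_le hx.1 hx.2

theorem mul_inv_add_mul_le_average [IsFiniteMeasure ν] [NeZero ν] {p q : ℝ}
    (hw : Integrable w ν) (hw' : Integrable (fun x => (w x)⁻¹) ν) (ha : 0 < a) (hp : 0 ≤ p)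
    (hpq : p ≤ a ^ 2 * q) (hwa : ∀ᵐ x ∂ν, a ≤ w x) :
    p * a⁻¹ + q * a ≤ p * ⨍ x, (w x)⁻¹ ∂ν + q * ⨍ x, w x ∂ν := by
  calc p * a⁻¹ + q * a = ⨍ _, p * a⁻¹ + q * a ∂ν := (average_const ν _).symm
    _ ≤ ⨍ x, p * (w x)⁻¹ + q * w x ∂ν :=
      average_mono_ae (integrable_const _) ((hw'.const_mul p).add (hw.const_mul q)) <|
        hwa.mono fun x hx => monotoneOn_mul_inv_add_mul ha hp hpq (Set.mem_Ici.2 le_rfl) hx hx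
    _ = p * ⨍ x, (w x)⁻¹ ∂ν + q * ⨍ x, w x ∂ν := by
      rw [average_add (hw'.const_mul p) (hw.const_mul q), average_const_mul, average_const_mul]

end Averages

theorem key_A2_inequality_general {d : ℕ} (J : Set (Fin d → ℝ))
    (w : (Fin d → ℝ) → ℝ) (hw : Measurable w) (hw0 : ∀ x, 0 ≤ w x)
    (a : ℝ) (ha : 0 < a)
    (h₂ : 0 < volume {x ∈ J | a < w x})
    (hint : IntegrableOn w J) (hint' : IntegrableOn (fun x => (w x)⁻¹) J)
    (x₁ y₁ x₂ y₂ : ℝ)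
    (hx₁ : x₁ = ⨍ x in {x ∈ J | w x ≤ a}, w x)
    (hy₁ : y₁ = ⨍ x in {x ∈ J | w x ≤ a}, (w x)⁻¹)
    (hx₂ : x₂ = ⨍ x in {x ∈ J | a < w x}, w x)
    (hy₂ : y₂ = ⨍ x in {x ∈ J | a < w x}, (w x)⁻¹) :
    0 ≤ x₁ * y₂ + x₂ * y₁ - y₁ * a - x₁ * a⁻¹ := by
  set S₁ := {x ∈ J | w x ≤ a}
  set S₂ := {x ∈ J | a < w x}
  have hS₁ : ∀ᵐ x ∂volume.restrict S₁, w x ≤ a :=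
    ae_restrict_of_ae_restrict_of_subset (fun x hx => hx.2)
      (ae_restrict_of_forall_mem (measurableSet_le hw measurable_const) fun _ hx => hx)
  have hS₂ : ∀ᵐ x ∂volume.restrict S₂, a ≤ w x :=
    ae_restrict_of_ae_restrict_of_subset (fun x hx => hx.2)
      (ae_restrict_of_forall_mem (measurableSet_lt measurable_const hw) fun _ hx => le_of_lt hx)
  -- `S₂` has finite measure because `w ≥ a > 0` on it and `w` is integrable on `J`.
  have hS₂_fin : volume S₂ ≠ ⊤ := by
    have hsub : S₂ ⊆ {x | a ≤ ‖w x‖} ∩ J :=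
      fun x hx => ⟨hx.2.le.trans (le_abs_self _), hx.1⟩
    exact ne_top_of_le_ne_top (hint.measure_norm_ge_lt_top ha).ne
      ((measure_mono hsub).trans (Measure.le_restrict_apply _ _))
  have := isFiniteMeasure_restrict.mpr hS₂_fin
  have : NeZero (volume.restrict S₂) := ⟨Measure.restrict_eq_zero.not.mpr h₂.ne'⟩
  have hx₁_nonneg : 0 ≤ x₁ := hx₁ ▸ average_nonneg (ae_of_all _ hw0)
  have hx₁_le : x₁ ≤ a ^ 2 * y₁ := hx₁ ▸ hy₁ ▸ average_le_sq_mul_average_inv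
    (hint.mono_set fun x hx => hx.1) (hint'.mono_set fun x hx => hx.1) (ae_of_all _ hw0) hS₁
  have key := mul_inv_add_mul_le_average (hint.mono_set fun x hx => hx.1)
    (hint'.mono_set fun x hx => hx.1) ha hx₁_nonneg hx₁_le hS₂
  rw [← hx₂, ← hy₂] at key
  linarith

theorem key_A2_inequality {d : ℕ} (J : Set (Fin d → ℝ)) (hJ : IsCube J)
    (w : (Fin d → ℝ) → ℝ) (hw : Measurable w) (hw0 : ∀ x, 0 ≤ w x)
    (a : ℝ) (ha : 0 < a)
    (h₁ : 0 < volume {x ∈ J | w x ≤ a}) (h₂ : 0 < volume {x ∈ J | a < w x})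
    (hint : IntegrableOn w J) (hint' : IntegrableOn (fun x => (w x)⁻¹) J)
    (x₁ y₁ x₂ y₂ : ℝ)
    (hx₁ : x₁ = ⨍ x in {x ∈ J | w x ≤ a}, w x)
    (hy₁ : y₁ = ⨍ x in {x ∈ J | w x ≤ a}, (w x)⁻¹)
    (hx₂ : x₂ = ⨍ x in {x ∈ J | a < w x}, w x)
    (hy₂ : y₂ = ⨍ x in {x ∈ J | a < w x}, (w x)⁻¹) :
    0 ≤ x₁ * y₂ + x₂ * y₁ - y₁ * a - x₁ * a⁻¹ :=
  key_A2_inequality_general J w hw hw0 a ha h₂ hint hint' x₁ y₁ x₂ y₂ hx₁ hy₁ hx₂ hy₂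
end
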